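/- arXiv:1509.06974 — 3 statements merged into one kernel-verified Lean document; each statement's English description precedes it below -/
import Mathlib

section
/- Let (A, ξ₀) be a rooted tree with finite vertex set, u, w : V(A) → (0,∞), 1 < p < q < ∞, 0 < σ < 1, and ξ ∈ V(A). Let A_{ξ,σ} be the induced subgraph on {η ≥ ξ : ‖w‖_{l_q(A_η)} ≥ σ ‖w‖_{l_q(A_ξ)}}. Then ‖u‖_{l_{p'}(A_{ξ,σ})} · ‖w‖_{l_q(A_ξ)} ≤ C(p,q,σ) · sup_{η ∈ V(A)} ‖u‖_{l_{p'}([ξ₀,η])} · ‖w‖_{l_q(A_η)}, where C(p,q,σ) may depend only on p, q, σ. -/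
open scoped ENNReal NNReal BigOperators

/-- A rooted tree, encoded via its tree partial order: every "lower set" of a
vertex (the path from the root to it) is a finite chain containing the root. -/
structure TreeOrder (V : Type) where
  le : V → V → Prop
  le_refl : ∀ a, le a a
  le_trans : ∀ a b c, le a b → le b c → le a c
  le_antisymm : ∀ a b, le a b → le b a → a = b
  root : V
  root_le : ∀ a, le root a
  finite_le : ∀ a : V, {b | le b a}.Finite
  chain_le : ∀ a b c, le b a → le c a → le b c ∨ le c b

/-- The path `[ξ₀, ξ]` from the root to `ξ`. -/
def TreeOrder.pathSet {V : Type} (T : TreeOrder V) (ξ : V) : Set V := {η | T.le η ξ}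

/-- The subtree `T_ξ` of all vertices `≥ ξ`. -/
def TreeOrder.subtree {V : Type} (T : TreeOrder V) (ξ : V) : Set V := {η | T.le ξ η}

/-- The segment `[ξ, η] = {ζ : ξ ≤ ζ ≤ η}`. -/
def TreeOrder.seg {V : Type} (T : TreeOrder V) (ξ η : V) : Set V :=
  {ζ | T.le ξ ζ ∧ T.le ζ η}

/-- The tree distance between comparable vertices `ξ ≤ η`:
one less than the number of vertices on the segment `[ξ, η]`. -/
noncomputable def TreeOrder.tdist {V : Type} (T : TreeOrder V) (ξ η : V) : ℕ :=
  (T.seg ξ η).ncard - 1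

/-- The level of a vertex: its distance to the root. -/
noncomputable def TreeOrder.level {V : Type} (T : TreeOrder V) (ξ : V) : ℕ :=
  T.tdist T.root ξ

/-- `V_k(ξ)`: the set of vertices `≥ ξ` at tree distance `k` from `ξ`. -/
noncomputable def TreeOrder.VSet {V : Type} (T : TreeOrder V) (ξ : V) (k : ℕ) : Set V :=
  {η | T.le ξ η ∧ T.tdist ξ η = k}

/-- `‖w‖_{l_r(s)} = (∑_{η ∈ s} w(η)^r)^{1/r}` (real-valued; the index sets used
below are finite). -/
noncomputable def rNorm {V : Type} (s : Set V) (w : V → ℝ) (r : ℝ) : ℝ :=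
  (∑' η : s, (w η) ^ r) ^ (1 / r)

/-- `V_{ξ,σ} = {η ≥ ξ : ‖w‖_{l_q(A_η)} ≥ σ ‖w‖_{l_q(A_ξ)}}`. -/
def VSig {V : Type} (T : TreeOrder V) (w : V → ℝ) (q σ : ℝ) (ξ : V) : Set V :=
  {η | T.le ξ η ∧ σ * rNorm (T.subtree ξ) w q ≤ rNorm (T.subtree η) w q}

/-- The set of maximal vertices of the induced subgraph `A_{ξ,σ}`. -/
def VMaxSig {V : Type} (T : TreeOrder V) (w : V → ℝ) (q σ : ℝ) (ξ : V) : Set V :=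
  {ζ ∈ VSig T w q σ ξ | ∀ η ∈ VSig T w q σ ξ, T.le ζ η → ζ = η}

/-!
Every vertex of `A_{ξ,σ}` lies on the path `[ξ₀,ζ]` to a maximal vertex `ζ` of `A_{ξ,σ}`, and
`σ ‖u‖_{l_{p'}([ξ₀,ζ])} ‖w‖_{l_q(A_ξ)} ≤ ‖u‖_{l_{p'}([ξ₀,ζ])} ‖w‖_{l_q(A_ζ)}` is bounded by the
supremum `S`. The subtrees `A_ζ` of the maximal vertices are disjoint and each carries at least
the fraction `σ^q` of the `l_q`-mass of `A_ξ`, so there are at most `σ^{-q}` of them. Hence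
`‖u‖_{l_{p'}(A_{ξ,σ})} ‖w‖_{l_q(A_ξ)} ≤ σ^{-q/p'} σ⁻¹ S`.
-/

open scoped Classical

section rNorm

variable {V : Type}

lemma rNorm_nonneg (s : Set V) {f : V → ℝ} (hf : ∀ x, 0 ≤ f x) (r : ℝ) : 0 ≤ rNorm s f r :=
  Real.rpow_nonneg (tsum_nonneg fun η : s => Real.rpow_nonneg (hf η) r) _

variable [Fintype V]

lemma rNorm_eq_sum (s : Set V) (f : V → ℝ) (r : ℝ) :
    rNorm s f r = (∑ η ∈ s.toFinset, f η ^ r) ^ (1 / r) := by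
  rw [rNorm, tsum_fintype, Finset.sum_subtype _ fun _ => Set.mem_toFinset]

lemma rNorm_rpow (s : Set V) {f : V → ℝ} (hf : ∀ x, 0 ≤ f x) {r : ℝ} (hr : r ≠ 0) :
    rNorm s f r ^ r = ∑ η ∈ s.toFinset, f η ^ r := by
  rw [rNorm_eq_sum, one_div,
    Real.rpow_inv_rpow (Finset.sum_nonneg fun η _ => Real.rpow_nonneg (hf η) r) hr]

lemma sum_toFinset_le_sum_of_subset_biUnion {ι : Type} {s : Set V} (I : Finset ι)
    (t : ι → Set V) (hs : s ⊆ ⋃ i ∈ I, t i) {g : V → ℝ} (hg : ∀ x, 0 ≤ g x) :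
    ∑ x ∈ s.toFinset, g x ≤ ∑ i ∈ I, ∑ x ∈ (t i).toFinset, g x :=
  calc ∑ x ∈ s.toFinset, g x
      ≤ ∑ x ∈ I.sup fun i => (t i).toFinset, g x := by
        refine Finset.sum_le_sum_of_subset_of_nonneg (fun x hx => ?_) fun x _ _ => hg x
        obtain ⟨i, hi, hxi⟩ := Set.mem_iUnion₂.1 (hs (Set.mem_toFinset.1 hx))
        exact Finset.mem_sup.2 ⟨i, hi, Set.mem_toFinset.2 hxi⟩
    _ ≤ ∑ i ∈ I, ∑ x ∈ (t i).toFinset, g x :=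
        Finset.apply_sup_le_sum (f := fun A : Finset V => ∑ x ∈ A, g x) rfl (fun {A B} => by
          rw [Finset.sup_eq_union, ← Finset.sum_union_inter]
          exact le_add_of_nonneg_right (Finset.sum_nonneg fun x _ => hg x)) I

lemma rNorm_le_of_subset_biUnion {ι : Type} {s : Set V} {f : V → ℝ} (hf : ∀ x, 0 ≤ f x)
    {r : ℝ} (hr : 0 < r) (I : Finset ι) (t : ι → Set V) (hs : s ⊆ ⋃ i ∈ I, t i) {B : ℝ}
    (hB0 : 0 ≤ B) (hB : ∀ i ∈ I, rNorm (t i) f r ≤ B) :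
    rNorm s f r ≤ (I.card : ℝ) ^ (1 / r) * B := by
  have hfr : ∀ x, 0 ≤ f x ^ r := fun x => Real.rpow_nonneg (hf x) r
  have hsum : ∑ η ∈ s.toFinset, f η ^ r ≤ I.card * B ^ r :=
    calc ∑ η ∈ s.toFinset, f η ^ r
        ≤ ∑ i ∈ I, ∑ η ∈ (t i).toFinset, f η ^ r :=
          sum_toFinset_le_sum_of_subset_biUnion I t hs hfr
      _ ≤ ∑ _i ∈ I, B ^ r := Finset.sum_le_sum fun i hi => by
          rw [← rNorm_rpow _ hf hr.ne']
          exact Real.rpow_le_rpow (rNorm_nonneg _ hf r) (hB i hi) hr.le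
      _ = I.card * B ^ r := by rw [Finset.sum_const, nsmul_eq_mul]
  calc rNorm s f r ≤ (I.card * B ^ r) ^ (1 / r) := by
        rw [rNorm_eq_sum]
        exact Real.rpow_le_rpow (Finset.sum_nonneg fun x _ => hfr x) hsum (by positivity)
    _ = (I.card : ℝ) ^ (1 / r) * B := by
        rw [Real.mul_rpow (Nat.cast_nonneg _) (by positivity), ← Real.rpow_mul hB0,
          mul_one_div_cancel hr.ne', Real.rpow_one]

lemma card_le_rpow_neg_of_pairwiseDisjoint {ι : Type} {s : Set V} {f : V → ℝ}
    (hf : ∀ x, 0 ≤ f x) {q σ : ℝ} (hq : 0 < q) (hσ : 0 < σ) (hs : 0 < rNorm s f q)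
    (I : Finset ι) (t : ι → Set V) (hdisj : (I : Set ι).PairwiseDisjoint t)
    (hts : ∀ i ∈ I, t i ⊆ s) (hmass : ∀ i ∈ I, σ * rNorm s f q ≤ rNorm (t i) f q) :
    (I.card : ℝ) ≤ σ ^ (-q) := by
  have hfq : ∀ x, 0 ≤ f x ^ q := fun x => Real.rpow_nonneg (hf x) q
  have key : I.card * (σ ^ q * rNorm s f q ^ q) ≤ rNorm s f q ^ q :=
    calc I.card * (σ ^ q * rNorm s f q ^ q)
        = ∑ _i ∈ I, (σ * rNorm s f q) ^ q := by
          rw [Finset.sum_const, nsmul_eq_mul, Real.mul_rpow hσ.le hs.le]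
      _ ≤ ∑ i ∈ I, ∑ η ∈ (t i).toFinset, f η ^ q := Finset.sum_le_sum fun i hi => by
          rw [← rNorm_rpow _ hf hq.ne']
          exact Real.rpow_le_rpow (by positivity) (hmass i hi) hq.le
      _ = ∑ η ∈ I.biUnion fun i => (t i).toFinset, f η ^ q :=
          (Finset.sum_biUnion fun i hi j hj hij =>
            Set.disjoint_toFinset.2 (hdisj hi hj hij)).symm
      _ ≤ ∑ η ∈ s.toFinset, f η ^ q :=
          Finset.sum_le_sum_of_subset_of_nonneg
            (Finset.biUnion_subset.2 fun i hi => Set.toFinset_subset_toFinset.2 (hts i hi))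
            fun x _ _ => hfq x
      _ = rNorm s f q ^ q := (rNorm_rpow _ hf hq.ne').symm
  have hσq : 0 < σ ^ q := Real.rpow_pos_of_pos hσ q
  have hsq : 0 < rNorm s f q ^ q := Real.rpow_pos_of_pos hs q
  rw [Real.rpow_neg hσ.le, ← one_div, le_div_iff₀ hσq]
  exact le_of_mul_le_mul_right (by rwa [one_mul, mul_assoc]) hsq

end rNorm

namespace TreeOrder

variable {V : Type} (T : TreeOrder V)

lemma disjoint_subtree {a b : V} (hab : ¬ T.le a b) (hba : ¬ T.le b a) :
    Disjoint (T.subtree a) (T.subtree b) :=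
  Set.disjoint_left.2 fun x hax hbx => (T.chain_le x a b hax hbx).elim hab hba

lemma subtree_subset_of_le {a b : V} (h : T.le a b) : T.subtree b ⊆ T.subtree a :=
  fun _ hx => T.le_trans _ _ _ h hx

variable (w : V → ℝ) (q σ : ℝ) (ξ : V)

lemma pairwiseDisjoint_subtree_VMaxSig : (VMaxSig T w q σ ξ).PairwiseDisjoint T.subtree :=
  fun _ h₁ _ h₂ hne => T.disjoint_subtree (fun h => hne (h₁.2 _ h₂.1 h))
    (fun h => hne (h₂.2 _ h₁.1 h).symm)

lemma exists_mem_VMaxSig_le [Finite V] {η : V} (hη : η ∈ VSig T w q σ ξ) :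
    ∃ ζ ∈ VMaxSig T w q σ ξ, T.le η ζ := by
  let _ : PartialOrder V :=
    { le := T.le
      le_refl := T.le_refl
      le_trans := T.le_trans
      le_antisymm := T.le_antisymm }
  obtain ⟨ζ, hηζ, hζ⟩ := (Set.toFinite (VSig T w q σ ξ)).exists_le_maximal hη
  exact ⟨ζ, ⟨hζ.1, fun η hη hle => T.le_antisymm _ _ hle (hζ.2 hη hle)⟩, hηζ⟩

lemma VSig_subset_biUnion_pathSet [Finite V] :
    VSig T w q σ ξ ⊆ ⋃ ζ ∈ VMaxSig T w q σ ξ, T.pathSet ζ := fun η hη => by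
  obtain ⟨ζ, hζ, hηζ⟩ := T.exists_mem_VMaxSig_le w q σ ξ hη
  exact Set.mem_biUnion hζ hηζ

end TreeOrder

theorem rNorm_VSig_mul_le_iSup {V : Type} [Fintype V] (T : TreeOrder V) {u w : V → ℝ}
    (hu : ∀ x, 0 ≤ u x) (hw : ∀ x, 0 ≤ w x) {q σ r : ℝ} (hq : 0 < q) (hσ : 0 < σ)
    (hr : 0 < r) (ξ : V) :
    rNorm (VSig T w q σ ξ) u r * rNorm (T.subtree ξ) w q ≤
      σ ^ (-q / r) * σ⁻¹ * ⨆ η, rNorm (T.pathSet η) u r * rNorm (T.subtree η) w q := by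
  set S := ⨆ η, rNorm (T.pathSet η) u r * rNorm (T.subtree η) w q
  have le_S : ∀ η, rNorm (T.pathSet η) u r * rNorm (T.subtree η) w q ≤ S :=
    le_ciSup (Set.finite_range _).bddAbove
  have hS : 0 ≤ S :=
    (mul_nonneg (rNorm_nonneg _ hu r) (rNorm_nonneg _ hw q)).trans (le_S ξ)
  set N := rNorm (T.subtree ξ) w q
  obtain hN | hN := (show 0 ≤ N from rNorm_nonneg _ hw q).eq_or_lt
  · rw [← hN, mul_zero]
    positivity
  set M := (VMaxSig T w q σ ξ).toFinset
  have hM : ∀ ζ ∈ M, ζ ∈ VMaxSig T w q σ ξ := fun _ => Set.mem_toFinset.1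
  have hcard : (M.card : ℝ) ≤ σ ^ (-q) :=
    card_le_rpow_neg_of_pairwiseDisjoint hw hq hσ hN M T.subtree
      (by simpa [M] using T.pairwiseDisjoint_subtree_VMaxSig w q σ ξ)
      (fun ζ hζ => T.subtree_subset_of_le (hM ζ hζ).1.1)
      (fun ζ hζ => (hM ζ hζ).1.2)
  have hpath : ∀ ζ ∈ M, rNorm (T.pathSet ζ) u r ≤ S / (σ * N) := fun ζ hζ =>
    (le_div_iff₀ (by positivity)).2 <|
      (mul_le_mul_of_nonneg_left (hM ζ hζ).1.2 (rNorm_nonneg _ hu r)).trans (le_S ζ)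
  have hcover : VSig T w q σ ξ ⊆ ⋃ ζ ∈ M, T.pathSet ζ := by
    simpa [M] using T.VSig_subset_biUnion_pathSet w q σ ξ
  calc rNorm (VSig T w q σ ξ) u r * N
      ≤ ((M.card : ℝ) ^ (1 / r) * (S / (σ * N))) * N := by
        gcongr
        exact rNorm_le_of_subset_biUnion hu hr M T.pathSet hcover (by positivity) hpath
    _ ≤ ((σ ^ (-q)) ^ (1 / r) * (S / (σ * N))) * N := by gcongr
    _ = σ ^ (-q / r) * σ⁻¹ * S := by
        rw [← Real.rpow_mul hσ.le]
        field_simp [hN.ne']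

theorem stmt3_general (p q σ : ℝ) (hp : 1 < p) (hpq : p < q) (hσ0 : 0 < σ) :
    ∃ C : ℝ, 0 < C ∧
      ∀ (V : Type) [Fintype V] (T : TreeOrder V) (u w : V → ℝ),
        (∀ ζ, 0 < u ζ) → (∀ ζ, 0 < w ζ) →
        ∀ ξ : V,
          rNorm (VSig T w q σ ξ) u (p / (p - 1)) * rNorm (T.subtree ξ) w q
            ≤ C * ⨆ η : V, rNorm (T.pathSet η) u (p / (p - 1)) * rNorm (T.subtree η) w q := by
  have hr : 0 < p / (p - 1) := div_pos (by linarith) (by linarith)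
  refine ⟨σ ^ (-q / (p / (p - 1))) * σ⁻¹, by positivity, ?_⟩
  intro V _ T u w hu hw ξ
  exact rNorm_VSig_mul_le_iSup T (fun x => (hu x).le) (fun x => (hw x).le) (by linarith) hσ0 hr ξ

/-- For `1 < p < q < ∞`, `0 < σ < 1`, there is `C = C(p,q,σ)` such that on every finite
rooted tree with positive weights,
`‖u‖_{l_{p'}(A_{ξ,σ})} ‖w‖_{l_q(A_ξ)} ≤ C sup_η ‖u‖_{l_{p'}([ξ₀,η])} ‖w‖_{l_q(A_η)}`. -/
theorem stmt3 (p q σ : ℝ) (hp : 1 < p) (hpq : p < q) (hσ0 : 0 < σ) (hσ1 : σ < 1) :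
    ∃ C : ℝ, 0 < C ∧
      ∀ (V : Type) [Fintype V] (T : TreeOrder V) (u w : V → ℝ),
        (∀ ζ, 0 < u ζ) → (∀ ζ, 0 < w ζ) →
        ∀ ξ : V,
          rNorm (VSig T w q σ ξ) u (p / (p - 1)) * rNorm (T.subtree ξ) w q
            ≤ C * ⨆ η : V, rNorm (T.pathSet η) u (p / (p - 1)) * rNorm (T.subtree η) w q :=
  stmt3_general p q σ hp hpq hσ0
end

section
/- (Bennett) Let 1 < p ≤ q < ∞ and let (û_n)_{n≥0}, (ŵ_n)_{n≥0} be nonnegative sequences with M := sup_{m≥0} (Σ_{n=m}^∞ ŵ_n^q)^{1/q} (Σ_{n=0}^m û_n^{p'})^{1/p'} < ∞. Then the least constant C in the inequality (Σ_{n=0}^∞ |ŵ_n Σ_{k=0}^n û_k f_k|^q)^{1/q} ≤ C (Σ_n |f_n|^p)^{1/p} for all f ∈ l_p satisfies C ≍ M with comparison constants depending only on p and q. -/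
/-!
Let `p'` be the conjugate exponent, `V m = ∑_{k ≤ m} û_k^{p'}` and `W m = ∑_{n ≥ m} ŵ_n^q`,
so that `M = sup_m W m^{1/q} V m^{1/p'}`. Testing the inequality on `f_k = û_k^{p'-1}` (`k ≤ m`)
gives `M ≤ C`. Conversely, Hölder's inequality with the weights `V k^{±1/(p p')}` and the
telescoping estimate `∑_{k ≤ n} û_k^{p'} V k^{-1/p} ≤ p' V n^{1/p'}` bound the `n`-th term by
`(p' M)^{q/p'} (∑_{k ≤ n} |f_k|^p V k^{1/p'})^{q/p} ŵ_n^q W n^{-1/p'}`. As `q/p ≥ 1`,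
Minkowski's inequality in `ℓ^{q/p}` and the dual estimate
`∑_{n ≥ k} ŵ_n^q W n^{-1/p'} ≤ p W k^{1/p}` then give `C ≤ p'^{1/p'} p^{1/q} M`.
-/

open scoped ENNReal NNReal BigOperators

/-- The operator norm of the weighted discrete Hardy operator
`f ↦ (ŵ_n ∑_{k ≤ n} û_k f_k)_n` from `l_p` to `l_q`: the least constant `C` in
`(∑_n |ŵ_n ∑_{k=0}^n û_k f_k|^q)^{1/q} ≤ C (∑_n |f_n|^p)^{1/p}`. -/
noncomputable def hardyNorm (u w : ℕ → ℝ≥0) (p q : ℝ) : ℝ≥0∞ :=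
  sInf {C : ℝ≥0∞ | ∀ f : ℕ → ℝ,
    (∑' n : ℕ, ((w n : ℝ≥0∞) *
      (‖∑ k ∈ Finset.range (n + 1), (u k : ℝ) * f k‖₊ : ℝ≥0∞)) ^ q) ^ (1 / q)
    ≤ C * (∑' n : ℕ, (‖f n‖₊ : ℝ≥0∞) ^ p) ^ (1 / p)}

/-- Bennett's constant `M = sup_m (∑_{n ≥ m} ŵ_n^q)^{1/q} (∑_{n=0}^m û_n^{p'})^{1/p'}`. -/
noncomputable def bennettM (u w : ℕ → ℝ≥0) (p q : ℝ) : ℝ≥0∞ :=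
  ⨆ m : ℕ, (∑' n : ℕ, if m ≤ n then (w n : ℝ≥0∞) ^ q else 0) ^ (1 / q) *
    (∑ n ∈ Finset.range (m + 1), (u n : ℝ≥0∞) ^ (p / (p - 1))) ^ ((p - 1) / p)

open Finset

-- A discrete form of `d(t^{1/q}) = q⁻¹ t^{-1/p} dt`, i.e. concavity of `t ↦ t^{1/q}`.
theorem Real.mul_add_rpow_neg_le {p q : ℝ} (hpq : p.HolderConjugate q) {x y : ℝ}
    (hx : 0 ≤ x) (hxy : 0 < x + y) :
    y * (x + y) ^ (-(1 / p)) ≤ q * ((x + y) ^ (1 / q) - x ^ (1 / q)) := by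
  have hsum : 1 / q + 1 / p = 1 := by rw [one_div, one_div, hpq.symm.inv_add_inv_eq_one]
  have young : q * (x ^ (1 / q) * (x + y) ^ (1 / p)) ≤ x + (q - 1) * (x + y) := calc
    _ ≤ q * (1 / q * x + 1 / p * (x + y)) := by
      gcongr
      · exact hpq.symm.nonneg
      exact Real.geom_mean_le_arith_mean2_weighted hpq.symm.one_div_nonneg
        hpq.one_div_nonneg hx hxy.le hsum
    _ = x + (q - 1) * (x + y) := by
      rw [← hpq.symm.div_conj_eq_sub_one]
      field_simp [hpq.symm.ne_zero]
  have split : (x + y) ^ (1 / q) * (x + y) ^ (1 / p) = x + y := by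
    rw [← Real.rpow_add hxy, hsum, Real.rpow_one]
  rw [Real.rpow_neg hxy.le, ← div_eq_mul_inv, div_le_iff₀ (Real.rpow_pos_of_pos hxy _)]
  linear_combination young - q * split

theorem ENNReal.mul_add_rpow_neg_le {p q : ℝ} (hpq : p.HolderConjugate q) (x y : ℝ≥0∞) :
    y * (x + y) ^ (-(1 / p)) ≤ ENNReal.ofReal q * ((x + y) ^ (1 / q) - x ^ (1 / q)) := by
  rcases eq_or_ne (x + y) ⊤ with htop | htop
  · rw [htop, ENNReal.top_rpow_of_neg (neg_lt_zero.2 hpq.one_div_pos), mul_zero]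
    exact zero_le
  rcases eq_or_ne (x + y) 0 with hzero | hzero
  · simp [(add_eq_zero.1 hzero).2]
  obtain ⟨hx, hy⟩ := ENNReal.add_ne_top.1 htop
  obtain ⟨X, hX, rfl⟩ : ∃ X : ℝ, 0 ≤ X ∧ ENNReal.ofReal X = x :=
    ⟨x.toReal, ENNReal.toReal_nonneg, ENNReal.ofReal_toReal hx⟩
  obtain ⟨Y, hY, rfl⟩ : ∃ Y : ℝ, 0 ≤ Y ∧ ENNReal.ofReal Y = y :=
    ⟨y.toReal, ENNReal.toReal_nonneg, ENNReal.ofReal_toReal hy⟩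
  rw [← ENNReal.ofReal_add hX hY] at hzero ⊢
  have hXY : 0 < X + Y := ENNReal.ofReal_pos.1 (pos_iff_ne_zero.2 hzero)
  rw [ENNReal.ofReal_rpow_of_pos hXY, ENNReal.ofReal_rpow_of_pos hXY,
    ENNReal.ofReal_rpow_of_nonneg hX hpq.symm.one_div_nonneg,
    ← ENNReal.ofReal_sub _ (by positivity), ← ENNReal.ofReal_mul hY,
    ← ENNReal.ofReal_mul hpq.symm.nonneg]
  exact ENNReal.ofReal_le_ofReal (Real.mul_add_rpow_neg_le hpq hX hXY)

theorem ENNReal.sum_range_tsub_le {f : ℕ → ℝ≥0∞} (hf : Monotone f) (n : ℕ) :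
    ∑ k ∈ range n, (f (k + 1) - f k) ≤ f n := by
  induction n with
  | zero => simp
  | succ n ih =>
    calc _ ≤ f n + (f (n + 1) - f n) := by rw [sum_range_succ]; gcongr
      _ = f (n + 1) := add_tsub_cancel_of_le (hf n.le_succ)

theorem ENNReal.sum_range_mul_rpow_neg_le {p q : ℝ} (hpq : p.HolderConjugate q)
    (v : ℕ → ℝ≥0∞) (n : ℕ) :
    ∑ k ∈ range n, v k * (∑ j ∈ range (k + 1), v j) ^ (-(1 / p)) ≤
      ENNReal.ofReal q * (∑ j ∈ range n, v j) ^ (1 / q) := by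
  set S : ℕ → ℝ≥0∞ := fun m => ∑ j ∈ range m, v j
  have hS : Monotone fun m => S m ^ (1 / q) := fun a b hab =>
    ENNReal.rpow_le_rpow (sum_le_sum_of_subset (range_subset_range.2 hab))
      hpq.symm.one_div_nonneg
  calc _ ≤ ∑ k ∈ range n, ENNReal.ofReal q * (S (k + 1) ^ (1 / q) - S k ^ (1 / q)) :=
        sum_le_sum fun k _ => by
          simpa only [S, sum_range_succ] using ENNReal.mul_add_rpow_neg_le hpq (S k) (v k)
    _ ≤ ENNReal.ofReal q * S n ^ (1 / q) := by
        rw [← mul_sum]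
        exact mul_le_mul_right (ENNReal.sum_range_tsub_le hS n) _

theorem ENNReal.tsum_ite_tsub_le {f : ℕ → ℝ≥0∞} (hf : Antitone f) (m : ℕ) :
    ∑' n, (if m ≤ n then f n - f (n + 1) else 0) ≤ f m := by
  have telescoped (N : ℕ) :
      ∑ n ∈ range N, (if m ≤ n then f n - f (n + 1) else 0) + f (max m N) ≤ f m := by
    induction N with
    | zero => simp
    | succ N ih =>
      rw [sum_range_succ]
      by_cases h : m ≤ N
      · rw [if_pos h, max_eq_right (h.trans N.le_succ), add_assoc,
          tsub_add_cancel_of_le (hf N.le_succ)]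
        rwa [max_eq_right h] at ih
      · rw [if_neg h, add_zero, max_eq_left (by omega)]
        rwa [max_eq_left (by omega : N ≤ m)] at ih
  exact ENNReal.tsum_le_of_sum_range_le fun N => le_self_add.trans (telescoped N)

theorem ENNReal.tsum_ite_le_eq_add (v : ℕ → ℝ≥0∞) (n : ℕ) :
    ∑' j, (if n ≤ j then v j else 0) = v n + ∑' j, (if n + 1 ≤ j then v j else 0) := by
  rw [ENNReal.tsum_eq_add_tsum_ite n, if_pos le_rfl]
  congr 1
  refine tsum_congr fun j => ?_
  split_ifs <;> first | rfl | omega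

theorem ENNReal.tsum_ite_mul_rpow_neg_le {p q : ℝ} (hpq : p.HolderConjugate q)
    (v : ℕ → ℝ≥0∞) (m : ℕ) :
    ∑' n, (if m ≤ n then v n * (∑' j, if n ≤ j then v j else 0) ^ (-(1 / p)) else 0) ≤
      ENNReal.ofReal q * (∑' j, if m ≤ j then v j else 0) ^ (1 / q) := by
  set T : ℕ → ℝ≥0∞ := fun n => ∑' j, if n ≤ j then v j else 0
  have hT : Antitone fun n => T n ^ (1 / q) := fun a b hab =>
    ENNReal.rpow_le_rpow (ENNReal.tsum_le_tsum fun j => by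
      split_ifs <;> first | exact le_rfl | exact zero_le | omega) hpq.symm.one_div_nonneg
  calc _ ≤ ∑' n, ENNReal.ofReal q *
        (if m ≤ n then T n ^ (1 / q) - T (n + 1) ^ (1 / q) else 0) := by
        refine ENNReal.tsum_le_tsum fun n => ?_
        split_ifs
        · have := ENNReal.mul_add_rpow_neg_le hpq (T (n + 1)) (v n)
          rwa [add_comm, ← ENNReal.tsum_ite_le_eq_add] at this
        · simp
    _ ≤ ENNReal.ofReal q * T m ^ (1 / q) := by
        rw [ENNReal.tsum_mul_left]
        exact mul_le_mul_right (ENNReal.tsum_ite_tsub_le hT m) _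

theorem ENNReal.Lp_sum_le_sum_Lp {ι κ : Type*} {r : ℝ} (hr : 1 ≤ r)
    (A : κ → ι → ℝ≥0∞) (s : Finset ι) (F : Finset κ) :
    (∑ n ∈ s, (∑ t ∈ F, A t n) ^ r) ^ (1 / r) ≤
      ∑ t ∈ F, (∑ n ∈ s, A t n ^ r) ^ (1 / r) := by
  classical
  induction F using Finset.induction with
  | empty => simp [ENNReal.zero_rpow_of_pos (zero_lt_one.trans_le hr), zero_lt_one.trans_le hr]
  | insert t F ht ih =>
    simp only [sum_insert ht]
    exact (ENNReal.Lp_add_le s _ _ hr).trans (add_le_add_right ih _)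

theorem ENNReal.Lp_tsum_le_tsum_Lp {ι κ : Type*} {r : ℝ} (hr : 1 ≤ r)
    (A : κ → ι → ℝ≥0∞) :
    (∑' n, (∑' t, A t n) ^ r) ^ (1 / r) ≤ ∑' t, (∑' n, A t n ^ r) ^ (1 / r) := by
  classical
  have hr0 : 0 < r := zero_lt_one.trans_le hr
  set Z := ∑' t, (∑' n, A t n ^ r) ^ (1 / r)
  rw [one_div, ENNReal.rpow_inv_le_iff hr0]
  refine ENNReal.summable.tsum_le_of_sum_le fun s => ?_
  have hsup (n : ι) : (∑' t, A t n) ^ r = ⨆ F : Finset κ, (∑ t ∈ F, A t n) ^ r := by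
    rw [ENNReal.tsum_eq_iSup_sum]
    exact (ENNReal.orderIsoRpow r hr0).map_iSup _
  simp_rw [hsup]
  rw [ENNReal.finsetSum_iSup fun F G => ⟨F ∪ G, fun n => ⟨?_, ?_⟩⟩]
  · refine iSup_le fun F => ?_
    rw [← ENNReal.rpow_inv_le_iff hr0, ← one_div]
    refine (ENNReal.Lp_sum_le_sum_Lp hr A s F).trans ?_
    refine le_trans ?_ (ENNReal.sum_le_tsum F)
    gcongr
    exact ENNReal.sum_le_tsum s
  all_goals
    exact ENNReal.rpow_le_rpow (sum_le_sum_of_subset (by simp)) hr0.le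

theorem ENNReal.tsum_sum_range_rpow_mul_le {r : ℝ} (hr : 1 ≤ r) (G ν : ℕ → ℝ≥0∞) :
    (∑' n, (∑ k ∈ range (n + 1), G k) ^ r * ν n) ^ (1 / r) ≤
      ∑' k, G k * (∑' n, if k ≤ n then ν n else 0) ^ (1 / r) := by
  have hr0 : 0 < r := zero_lt_one.trans_le hr
  have cancel (x : ℝ≥0∞) : (x ^ (1 / r)) ^ r = x := by
    rw [← ENNReal.rpow_mul, one_div_mul_cancel hr0.ne', ENNReal.rpow_one]
  set A : ℕ → ℕ → ℝ≥0∞ := fun k n => if k ≤ n then G k * ν n ^ (1 / r) else 0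
  have hrow (n : ℕ) : (∑' k, A k n) ^ r = (∑ k ∈ range (n + 1), G k) ^ r * ν n := by
    rw [tsum_eq_sum (s := range (n + 1)) fun k hk => if_neg (by simpa using hk),
      sum_congr rfl fun k hk => if_pos (by simpa [Nat.lt_succ_iff] using hk), ← sum_mul,
      ENNReal.mul_rpow_of_nonneg _ _ hr0.le, cancel]
  have hcol (k : ℕ) :
      (∑' n, A k n ^ r) ^ (1 / r) = G k * (∑' n, if k ≤ n then ν n else 0) ^ (1 / r) := by
    have (n : ℕ) : A k n ^ r = G k ^ r * if k ≤ n then ν n else 0 := by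
      dsimp only [A]
      split_ifs
      · rw [ENNReal.mul_rpow_of_nonneg _ _ hr0.le, cancel]
      · simp [hr0]
    rw [tsum_congr this, ENNReal.tsum_mul_left, ENNReal.mul_rpow_of_nonneg _ _ (by positivity),
      ← ENNReal.rpow_mul, mul_one_div_cancel hr0.ne', ENNReal.rpow_one]
  simpa only [hrow, hcol] using ENNReal.Lp_tsum_le_tsum_Lp hr A

noncomputable def headSum (u : ℕ → ℝ≥0) (s : ℝ) (m : ℕ) : ℝ≥0∞ :=
  ∑ k ∈ range (m + 1), (u k : ℝ≥0∞) ^ s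

noncomputable def tailSum (w : ℕ → ℝ≥0) (s : ℝ) (m : ℕ) : ℝ≥0∞ :=
  ∑' n, if m ≤ n then (w n : ℝ≥0∞) ^ s else 0

/-- The extremal sequence for Hölder's inequality in `∑_{k ≤ m} u k * f k`. -/
noncomputable def bennettTest (u : ℕ → ℝ≥0) (p' : ℝ) (m : ℕ) (k : ℕ) : ℝ≥0 :=
  if k ≤ m then u k ^ (p' - 1) else 0

section Bennett

variable {p p' q : ℝ} (u w : ℕ → ℝ≥0)

theorem bennettM_eq_iSup (hpp' : p.HolderConjugate p') :
    bennettM u w p q = ⨆ m, tailSum w q m ^ (1 / q) * headSum u p' m ^ (1 / p') := by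
  rw [hpp'.conjugate_eq, one_div_div]
  rfl

theorem rpow_le_headSum {s : ℝ} {k m : ℕ} (hkm : k ≤ m) :
    (u k : ℝ≥0∞) ^ s ≤ headSum u s m :=
  single_le_sum (f := fun j => (u j : ℝ≥0∞) ^ s) (fun _ _ => zero_le)
    (mem_range.2 (Nat.lt_succ_of_le hkm))

theorem rpow_le_tailSum {s : ℝ} {m n : ℕ} (hmn : m ≤ n) :
    (w n : ℝ≥0∞) ^ s ≤ tailSum w s m := by
  simpa [tailSum, hmn] using
    ENNReal.le_tsum (f := fun k => if m ≤ k then (w k : ℝ≥0∞) ^ s else 0) n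

theorem headSum_ne_top {s : ℝ} (hs : 0 ≤ s) (m : ℕ) : headSum u s m ≠ ⊤ :=
  ENNReal.sum_ne_top.2 fun _ _ => ENNReal.rpow_ne_top_of_nonneg hs ENNReal.coe_ne_top

theorem sum_range_mul_le_headSum (hpp' : p.HolderConjugate p') (g : ℕ → ℝ≥0∞) (n : ℕ) :
    ∑ k ∈ range (n + 1), u k * g k ≤
      (∑ k ∈ range (n + 1), g k ^ p * headSum u p' k ^ (1 / p')) ^ (1 / p) *
        (ENNReal.ofReal p' * headSum u p' n ^ (1 / p')) ^ (1 / p') := by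
  set V := headSum u p'
  set α := 1 / (p * p')
  have hsplit (k : ℕ) : (u k : ℝ≥0∞) * g k = (g k * V k ^ α) * (u k * V k ^ (-α)) := by
    rcases eq_or_ne (V k) 0 with hV | hV
    · have : (u k : ℝ≥0∞) ^ p' = 0 := le_zero_iff.1 (hV ▸ rpow_le_headSum u le_rfl)
      simp [(ENNReal.rpow_eq_zero_iff_of_pos hpp'.symm.pos).1 this]
    · rw [mul_mul_mul_comm, ← ENNReal.rpow_add _ _ hV (headSum_ne_top u hpp'.symm.nonneg k),
        add_neg_cancel, ENNReal.rpow_zero, mul_one, mul_comm]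
  have hfirst (k : ℕ) : (g k * V k ^ α) ^ p = g k ^ p * V k ^ (1 / p') := by
    rw [ENNReal.mul_rpow_of_nonneg _ _ hpp'.nonneg, ← ENNReal.rpow_mul]
    congr 2
    simp only [α]
    field_simp [hpp'.ne_zero]
  have hsecond (k : ℕ) :
      ((u k : ℝ≥0∞) * V k ^ (-α)) ^ p' = (u k : ℝ≥0∞) ^ p' * V k ^ (-(1 / p)) := by
    rw [ENNReal.mul_rpow_of_nonneg _ _ hpp'.symm.nonneg, ← ENNReal.rpow_mul]
    congr 2
    simp only [α]
    field_simp [hpp'.symm.ne_zero]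
  calc ∑ k ∈ range (n + 1), (u k : ℝ≥0∞) * g k
      = ∑ k ∈ range (n + 1), (g k * V k ^ α) * (u k * V k ^ (-α)) :=
        sum_congr rfl fun k _ => hsplit k
    _ ≤ (∑ k ∈ range (n + 1), (g k * V k ^ α) ^ p) ^ (1 / p) *
          (∑ k ∈ range (n + 1), ((u k : ℝ≥0∞) * V k ^ (-α)) ^ p') ^ (1 / p') :=
        ENNReal.inner_le_Lp_mul_Lq _ _ _ hpp'
    _ ≤ _ := by
        simp only [hfirst, hsecond]
        gcongr
        · exact hpp'.symm.one_div_nonneg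
        exact ENNReal.sum_range_mul_rpow_neg_le hpp' (fun k => (u k : ℝ≥0∞) ^ p') (n + 1)

theorem rpow_mul_sum_range_le (hpp' : p.HolderConjugate p') (hq : 0 < q) {M : ℝ≥0∞}
    (hMtop : M ≠ ⊤) (hM : ∀ m, tailSum w q m ^ (1 / q) * headSum u p' m ^ (1 / p') ≤ M)
    (g : ℕ → ℝ≥0∞) (n : ℕ) :
    ((w n : ℝ≥0∞) * ∑ k ∈ range (n + 1), u k * g k) ^ q ≤
      (ENNReal.ofReal p' * M) ^ (q / p') *
        ((∑ k ∈ range (n + 1), g k ^ p * headSum u p' k ^ (1 / p')) ^ (q / p) *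
          ((w n : ℝ≥0∞) ^ q * tailSum w q n ^ (-(1 / p')))) := by
  rcases eq_or_ne (w n) 0 with hw | hw
  · simp [hw, hq]
  set W := tailSum w q n
  set T := ∑ k ∈ range (n + 1), g k ^ p * headSum u p' k ^ (1 / p')
  have hW : W ≠ 0 := ((ENNReal.rpow_pos (ENNReal.coe_pos.2 (pos_iff_ne_zero.2 hw))
    ENNReal.coe_ne_top).trans_le (rpow_le_tailSum w le_rfl)).ne'
  have hV : headSum u p' n ^ (1 / p') ≤ M * W ^ (-(1 / q)) := by
    rw [ENNReal.rpow_neg, ← div_eq_mul_inv, ENNReal.le_div_iff_mul_le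
      (Or.inl (by simp [hW, hq.le])) (Or.inr hMtop), mul_comm]
    exact hM n
  have hp'0 : 0 ≤ 1 / p' := hpp'.symm.one_div_nonneg
  calc ((w n : ℝ≥0∞) * ∑ k ∈ range (n + 1), u k * g k) ^ q
      ≤ ((w n : ℝ≥0∞) *
          (T ^ (1 / p) * (ENNReal.ofReal p' * (M * W ^ (-(1 / q)))) ^ (1 / p'))) ^ q := by
        gcongr
        refine (sum_range_mul_le_headSum u hpp' g n).trans ?_
        gcongr
    _ = _ := by
        rw [← mul_assoc (ENNReal.ofReal p'), ENNReal.mul_rpow_of_nonneg _ _ hp'0]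
        simp only [ENNReal.mul_rpow_of_nonneg _ _ hq.le]
        simp only [← ENNReal.rpow_mul]
        rw [show 1 / p * q = q / p by ring, show 1 / p' * q = q / p' by ring,
          show -(1 / q) * (1 / p') * q = -(1 / p') by field_simp]
        ring

theorem tsum_rpow_mul_tailSum_le (hpp' : p.HolderConjugate p') (hpq : p ≤ q) {M : ℝ≥0∞}
    (hM : ∀ m, tailSum w q m ^ (1 / q) * headSum u p' m ^ (1 / p') ≤ M)
    (g : ℕ → ℝ≥0∞) :
    (∑' n, (∑ k ∈ range (n + 1), g k ^ p * headSum u p' k ^ (1 / p')) ^ (q / p) *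
        ((w n : ℝ≥0∞) ^ q * tailSum w q n ^ (-(1 / p')))) ^ (p / q) ≤
      ENNReal.ofReal p ^ (p / q) * (M * ∑' k, g k ^ p) := by
  have hr : 1 ≤ q / p := (one_le_div hpp'.pos).2 hpq
  have hpq0 : 0 ≤ p / q := div_nonneg hpp'.nonneg (hpp'.nonneg.trans hpq)
  calc _ ≤ ∑' k, g k ^ p * headSum u p' k ^ (1 / p') *
          (∑' n, if k ≤ n then (w n : ℝ≥0∞) ^ q * tailSum w q n ^ (-(1 / p')) else 0) ^
            (p / q) := by
        simpa only [one_div_div] using ENNReal.tsum_sum_range_rpow_mul_le hr _ _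
    _ ≤ ∑' k, g k ^ p * headSum u p' k ^ (1 / p') *
          (ENNReal.ofReal p * tailSum w q k ^ (1 / p)) ^ (p / q) := by
        gcongr with k
        exact ENNReal.tsum_ite_mul_rpow_neg_le hpp'.symm (fun n => (w n : ℝ≥0∞) ^ q) k
    _ = ENNReal.ofReal p ^ (p / q) *
          ∑' k, g k ^ p * (tailSum w q k ^ (1 / q) * headSum u p' k ^ (1 / p')) := by
        rw [← ENNReal.tsum_mul_left]
        refine tsum_congr fun k => ?_
        rw [ENNReal.mul_rpow_of_nonneg _ _ hpq0, ← ENNReal.rpow_mul,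
          show 1 / p * (p / q) = 1 / q by field_simp [hpp'.ne_zero]]
        ring
    _ ≤ ENNReal.ofReal p ^ (p / q) * ∑' k, g k ^ p * M := by
        gcongr with k
        exact hM k
    _ = ENNReal.ofReal p ^ (p / q) * (M * ∑' k, g k ^ p) := by
        rw [ENNReal.tsum_mul_right, mul_comm M]

theorem tsum_rpow_mul_sum_range_le (hpp' : p.HolderConjugate p') (hpq : p ≤ q) {M : ℝ≥0∞}
    (hMtop : M ≠ ⊤) (hM : ∀ m, tailSum w q m ^ (1 / q) * headSum u p' m ^ (1 / p') ≤ M)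
    (g : ℕ → ℝ≥0∞) :
    (∑' n, ((w n : ℝ≥0∞) * ∑ k ∈ range (n + 1), u k * g k) ^ q) ^ (1 / q) ≤
      ENNReal.ofReal p' ^ (1 / p') * ENNReal.ofReal p ^ (1 / q) * M *
        (∑' k, g k ^ p) ^ (1 / p) := by
  have hq : 0 < q := hpp'.pos.trans_le hpq
  have hp'0 : 0 ≤ 1 / p' := hpp'.symm.one_div_nonneg
  have hp0 : 0 ≤ 1 / p := hpp'.one_div_nonneg
  have hMsplit : M ^ (1 / p') * M ^ (1 / p) = M := by
    rw [← ENNReal.rpow_add_of_nonneg _ _ hp'0 hp0, add_comm, hpp'.one_div_add_one_div,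
      div_one, ENNReal.rpow_one]
  set S := ∑' n, (∑ k ∈ range (n + 1), g k ^ p * headSum u p' k ^ (1 / p')) ^ (q / p) *
    ((w n : ℝ≥0∞) ^ q * tailSum w q n ^ (-(1 / p')))
  calc _ ≤ ((ENNReal.ofReal p' * M) ^ (q / p') * S) ^ (1 / q) := by
        rw [← ENNReal.tsum_mul_left]
        gcongr with n
        exact rpow_mul_sum_range_le u w hpp' hq hMtop hM g n
    _ = (ENNReal.ofReal p' * M) ^ (1 / p') * (S ^ (p / q)) ^ (1 / p) := by
        rw [ENNReal.mul_rpow_of_nonneg _ _ (by positivity), ← ENNReal.rpow_mul,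
          ← ENNReal.rpow_mul,
          show q / p' * (1 / q) = 1 / p' by field_simp,
          show p / q * (1 / p) = 1 / q by field_simp [hpp'.ne_zero]]
    _ ≤ (ENNReal.ofReal p' * M) ^ (1 / p') *
          (ENNReal.ofReal p ^ (p / q) * (M * ∑' k, g k ^ p)) ^ (1 / p) := by
        gcongr
        exact tsum_rpow_mul_tailSum_le u w hpp' hpq hM g
    _ = ENNReal.ofReal p' ^ (1 / p') * ENNReal.ofReal p ^ (1 / q) * (M ^ (1 / p') * M ^ (1 / p)) *
          (∑' k, g k ^ p) ^ (1 / p) := by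
        simp only [ENNReal.mul_rpow_of_nonneg _ _ hp'0, ENNReal.mul_rpow_of_nonneg _ _ hp0]
        rw [← ENNReal.rpow_mul, show p / q * (1 / p) = 1 / q by field_simp [hpp'.ne_zero]]
        ring
    _ = _ := by rw [hMsplit]

theorem hardyNorm_le_mul_bennettM (hpp' : p.HolderConjugate p') (hpq : p ≤ q)
    (hM : bennettM u w p q ≠ ⊤) :
    hardyNorm u w p q ≤
      ENNReal.ofReal p' ^ (1 / p') * ENNReal.ofReal p ^ (1 / q) * bennettM u w p q := by
  have hle (m : ℕ) :
      tailSum w q m ^ (1 / q) * headSum u p' m ^ (1 / p') ≤ bennettM u w p q := by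
    rw [bennettM_eq_iSup u w hpp']
    exact le_iSup (fun m => tailSum w q m ^ (1 / q) * headSum u p' m ^ (1 / p')) m
  have hq : 0 < q := hpp'.pos.trans_le hpq
  refine sInf_le fun f => le_trans ?_ (tsum_rpow_mul_sum_range_le u w hpp' hpq hM hle _)
  refine ENNReal.rpow_le_rpow (ENNReal.tsum_le_tsum fun n => ENNReal.rpow_le_rpow ?_ hq.le)
    (one_div_pos.2 hq).le
  gcongr
  calc (‖∑ k ∈ range (n + 1), (u k : ℝ) * f k‖₊ : ℝ≥0∞)
      ≤ ((∑ k ∈ range (n + 1), ‖(u k : ℝ) * f k‖₊ : ℝ≥0) : ℝ≥0∞) :=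
        ENNReal.coe_le_coe.2 (nnnorm_sum_le _ _)
    _ = ∑ k ∈ range (n + 1), (u k : ℝ≥0∞) * ‖f k‖₊ := by
        push_cast [nnnorm_mul, NNReal.nnnorm_eq]
        rfl

theorem sum_range_ite_rpow {s : ℝ} {m n : ℕ} (hmn : m ≤ n) :
    ∑ k ∈ range (n + 1), (if k ≤ m then (u k : ℝ≥0∞) ^ s else 0) = headSum u s m := by
  rw [← sum_filter]
  congr 1
  ext k
  simp only [mem_filter, mem_range]
  omega

theorem tsum_nnnorm_bennettTest_rpow (hpp' : p.HolderConjugate p') (m : ℕ) :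
    ∑' k, (‖(bennettTest u p' m k : ℝ)‖₊ : ℝ≥0∞) ^ p = headSum u p' m := by
  have hterm (k : ℕ) : (‖(bennettTest u p' m k : ℝ)‖₊ : ℝ≥0∞) ^ p =
      if k ≤ m then (u k : ℝ≥0∞) ^ p' else 0 := by
    rw [NNReal.nnnorm_eq, bennettTest]
    split_ifs
    · rw [ENNReal.coe_rpow_of_nonneg _ hpp'.symm.sub_one_pos.le, ← ENNReal.rpow_mul,
        hpp'.symm.sub_one_mul_conj]
    · simp [hpp'.pos]
  rw [tsum_congr hterm, tsum_eq_sum (s := range (m + 1)) fun k hk => if_neg (by simpa using hk),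
    sum_range_ite_rpow u le_rfl]

theorem nnnorm_sum_range_mul_bennettTest (hpp' : p.HolderConjugate p') {m n : ℕ}
    (hmn : m ≤ n) :
    (‖∑ k ∈ range (n + 1), (u k : ℝ) * bennettTest u p' m k‖₊ : ℝ≥0∞) = headSum u p' m := by
  have hterm (k : ℕ) : u k * bennettTest u p' m k = if k ≤ m then u k ^ p' else 0 := by
    rw [bennettTest]
    split_ifs
    · conv_rhs => rw [← add_sub_cancel 1 p',
        NNReal.rpow_add' (by rw [add_sub_cancel]; exact hpp'.symm.ne_zero), NNReal.rpow_one]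
    · exact mul_zero _
  rw [← sum_range_ite_rpow u hmn]
  norm_cast
  rw [NNReal.nnnorm_eq, sum_congr rfl fun k _ => hterm k]
  push_cast
  refine sum_congr rfl fun k _ => ?_
  split_ifs
  · exact ENNReal.coe_rpow_of_nonneg _ hpp'.symm.nonneg
  · rfl

theorem tailSum_rpow_mul_headSum_rpow_le_hardyNorm (hpp' : p.HolderConjugate p') (hq : 0 < q)
    (m : ℕ) : tailSum w q m ^ (1 / q) * headSum u p' m ^ (1 / p') ≤ hardyNorm u w p q := by
  refine le_sInf fun C hC => ?_
  set V := headSum u p' m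
  have hlow : tailSum w q m ^ (1 / q) * V ≤ C * V ^ (1 / p) := by
    refine le_trans ?_ (tsum_nnnorm_bennettTest_rpow u hpp' m ▸ hC fun k => bennettTest u p' m k)
    calc tailSum w q m ^ (1 / q) * V = (tailSum w q m * V ^ q) ^ (1 / q) := by
          rw [ENNReal.mul_rpow_of_nonneg _ _ (one_div_pos.2 hq).le, ← ENNReal.rpow_mul,
            mul_one_div_cancel hq.ne', ENNReal.rpow_one]
      _ = (∑' n, (if m ≤ n then (w n : ℝ≥0∞) ^ q else 0) * V ^ q) ^ (1 / q) := by
          rw [ENNReal.tsum_mul_right]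
          rfl
      _ ≤ _ := by
          refine ENNReal.rpow_le_rpow (ENNReal.tsum_le_tsum fun n => ?_) (one_div_pos.2 hq).le
          split_ifs with hmn
          · rw [nnnorm_sum_range_mul_bennettTest u hpp' hmn, ENNReal.mul_rpow_of_nonneg _ _ hq.le]
          · rw [zero_mul]
            exact zero_le
  rcases eq_or_ne V 0 with hV0 | hV0
  · rw [hV0, ENNReal.zero_rpow_of_pos hpp'.symm.one_div_pos, mul_zero]
    exact zero_le
  have hVtop : V ≠ ⊤ := headSum_ne_top u hpp'.symm.nonneg m
  refine (ENNReal.mul_le_mul_iff_left (c := V ^ (1 / p)) (by simp [hV0, hVtop, hpp'.pos])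
    (by simp [hV0, hVtop])).1 ?_
  rwa [mul_assoc, ← ENNReal.rpow_add_of_nonneg _ _ hpp'.symm.one_div_nonneg
    hpp'.one_div_nonneg, hpp'.symm.one_div_add_one_div, div_one, ENNReal.rpow_one]

theorem bennettM_le_hardyNorm (hpp' : p.HolderConjugate p') (hq : 0 < q) :
    bennettM u w p q ≤ hardyNorm u w p q := by
  rw [bennettM_eq_iSup u w hpp']
  exact iSup_le (tailSum_rpow_mul_headSum_rpow_le_hardyNorm u w hpp' hq)

end Bennett

/-- (Bennett) For `1 < p ≤ q < ∞` and nonnegative sequences `û, ŵ` with `M < ∞`,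
the operator norm of the discrete Hardy operator `l_p → l_q` is comparable to `M`,
with constants depending only on `p, q`. -/
theorem stmt5 (p q : ℝ) (hp : 1 < p) (hpq : p ≤ q) :
    ∃ c C : ℝ≥0∞, 0 < c ∧ C < ⊤ ∧
      ∀ u w : ℕ → ℝ≥0, bennettM u w p q < ⊤ →
        c * bennettM u w p q ≤ hardyNorm u w p q ∧
        hardyNorm u w p q ≤ C * bennettM u w p q := by
  have hpp' := Real.HolderConjugate.conjExponent hp
  refine ⟨1, ENNReal.ofReal p.conjExponent ^ (1 / p.conjExponent) * ENNReal.ofReal p ^ (1 / q),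
    one_pos, ?_, fun u w hM => ⟨?_, hardyNorm_le_mul_bennettM u w hpp' hpq hM.ne⟩⟩
  · exact ENNReal.mul_lt_top (ENNReal.rpow_lt_top_of_nonneg hpp'.symm.one_div_nonneg
      ENNReal.ofReal_ne_top) (ENNReal.rpow_lt_top_of_nonneg (one_div_pos.2 (by linarith)).le
      ENNReal.ofReal_ne_top)
  · rw [one_mul]
    exact bennettM_le_hardyNorm u w hpp' (by linarith)
end

section
/- Let 1 < p ≤ q < ∞, n ∈ ℕ, and let S : {0,...,n} → (0,∞) satisfy S(j+1)/S(j) ≥ R for some R > 1. Then Σ_{k=0}^n (S(n)/S(k)) (Σ_{j=0}^k (S(j)/S(n))^{1/p} a_j)^q ≤ C(p,q,R) Σ_{j=0}^n (S(j)/S(n))^{q/p - 1} a_j^q for all nonnegative numbers a_0, ..., a_n. -/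
open scoped BigOperators

private lemma geo_bound (x : ℝ) (h0 : 0 ≤ x) (h1 : x < 1) (N : ℕ) :
    ∑ i ∈ Finset.range N, x ^ i ≤ (1 - x)⁻¹ := by
  have hs : Summable (fun i : ℕ => x ^ i) := summable_geometric_of_lt_one h0 h1
  calc ∑ i ∈ Finset.range N, x ^ i ≤ ∑' i : ℕ, x ^ i :=
        Summable.sum_le_tsum _ (fun i _ => by positivity) hs
    _ = (1 - x)⁻¹ := tsum_geometric_of_lt_one h0 h1

/-- Weighted discrete Hardy-type inequality with geometrically growing weights:
for `1 < p ≤ q < ∞` and `S` with `S(j+1) ≥ R S(j)`, `R > 1`,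
`∑_{k=0}^n (S(n)/S(k)) (∑_{j=0}^k (S(j)/S(n))^{1/p} a_j)^q
  ≤ C(p,q,R) ∑_{j=0}^n (S(j)/S(n))^{q/p-1} a_j^q`. -/
theorem stmt6 (p q R : ℝ) (hp : 1 < p) (hpq : p ≤ q) (hR : 1 < R) :
    ∃ C : ℝ, 0 < C ∧
      ∀ (n : ℕ) (S : ℕ → ℝ) (a : ℕ → ℝ),
        (∀ j, 0 < S j) → (∀ j, j < n → R * S j ≤ S (j + 1)) →
        (∀ j, 0 ≤ a j) →
        ∑ k ∈ Finset.range (n + 1), (S n / S k) *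
            (∑ j ∈ Finset.range (k + 1), (S j / S n) ^ (1 / p) * a j) ^ q
          ≤ C * ∑ j ∈ Finset.range (n + 1), (S j / S n) ^ (q / p - 1) * (a j) ^ q := by
  have hR0 : (0:ℝ) < R := by linarith
  have hq1 : 1 < q := lt_of_lt_of_le hp hpq
  have hqm1 : (0:ℝ) < q - 1 := by linarith
  set e : ℝ := 1 / (2 * (q - 1)) with he
  have he0 : 0 < e := by positivity
  set r : ℝ := R ^ (-e) with hrdef
  have hr0 : 0 < r := Real.rpow_pos_of_pos hR0 _
  have hr1 : r < 1 := Real.rpow_lt_one_of_one_lt_of_neg hR (by linarith)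
  set s : ℝ := R ^ (-(1/2) : ℝ) with hsdef
  have hs0 : 0 < s := Real.rpow_pos_of_pos hR0 _
  have hs1 : s < 1 := Real.rpow_lt_one_of_one_lt_of_neg hR (by norm_num)
  -- key identity
  have hkey : R⁻¹ * r ^ (1 - q) = s := by
    show R⁻¹ * (R ^ (-e)) ^ (1 - q) = R ^ (-(1/2) : ℝ)
    rw [← Real.rpow_mul hR0.le, ← Real.rpow_neg_one R, ← Real.rpow_add hR0]
    congr 1
    have hne : q - 1 ≠ 0 := ne_of_gt hqm1
    rw [he]
    field_simp
    ring
  set K : ℝ := ((1 - r)⁻¹) ^ (q - 1) with hKdef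
  have hK0 : 0 < K := Real.rpow_pos_of_pos (inv_pos.mpr (by linarith)) _
  refine ⟨K * (1 - s)⁻¹, mul_pos hK0 (inv_pos.mpr (by linarith)), ?_⟩
  intro n S a hS hgrow ha
  have hSn : 0 < S n := hS n
  -- geometric growth of S
  have F1 : ∀ j m : ℕ, j + m ≤ n → S j * R ^ m ≤ S (j + m) := by
    intro j m
    induction m with
    | zero => simp
    | succ m ih =>
      intro h
      have h1 : j + m ≤ n := by omega
      have h2 := hgrow (j + m) (by omega)
      have h3 := ih h1
      have : S j * R ^ (m + 1) = R * (S j * R ^ m) := by ring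
      rw [show j + (m+1) = (j + m) + 1 from rfl]
      calc S j * R ^ (m + 1) = R * (S j * R ^ m) := by ring
        _ ≤ R * S (j + m) := by nlinarith
        _ ≤ S (j + m + 1) := h2
  -- abbreviations
  set b : ℕ → ℝ := fun j => (S j / S n) ^ (1 / p) * a j with hb
  have hb0 : ∀ j, 0 ≤ b j := fun j => mul_nonneg (Real.rpow_nonneg (div_pos (hS j) hSn).le _) (ha j)
  -- Step A: Jensen with geometric weights
  have stepA : ∀ k : ℕ,
      (∑ j ∈ Finset.range (k + 1), b j) ^ q
        ≤ K * ∑ j ∈ Finset.range (k + 1), ((r ^ (k - j) : ℝ)) ^ (1 - q) * (b j) ^ q := by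
    intro k
    set c : ℕ → ℝ := fun j => r ^ (k - j) with hc
    have hc0 : ∀ j, 0 < c j := fun j => pow_pos hr0 _
    set Ck : ℝ := ∑ j ∈ Finset.range (k + 1), c j with hCk
    have hCk0 : 0 < Ck := Finset.sum_pos (fun j _ => hc0 j) ⟨0, by simp⟩
    have hCkle : Ck ≤ (1 - r)⁻¹ := by
      have : Ck = ∑ i ∈ Finset.range (k + 1), r ^ i := by
        rw [hCk]
        rw [← Finset.sum_range_reflect (fun i => r ^ i) (k+1)]
        apply Finset.sum_congr rfl
        intro j hj
        simp only [Finset.mem_range] at hj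
        congr 1
      rw [this]
      exact geo_bound r hr0.le hr1 _
    have jensen := Real.rpow_arith_mean_le_arith_mean_rpow (Finset.range (k+1))
        (fun j => c j / Ck) (fun j => b j * Ck / c j)
        (fun j _ => (div_pos (hc0 j) hCk0).le)
        (by rw [← Finset.sum_div, ← hCk, div_self (ne_of_gt hCk0)])
        (fun j _ => div_nonneg (mul_nonneg (hb0 j) hCk0.le) (hc0 j).le) hq1.le
    have heq1 : ∑ j ∈ Finset.range (k+1), (c j / Ck) * (b j * Ck / c j)
        = ∑ j ∈ Finset.range (k + 1), b j := by
      apply Finset.sum_congr rfl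
      intro j _
      have := (hc0 j).ne'
      field_simp
    have heq2 : ∀ j ∈ Finset.range (k+1),
        (c j / Ck) * (b j * Ck / c j) ^ q
          = Ck ^ (q - 1) * ((c j) ^ (1 - q) * (b j) ^ q) := by
      intro j _
      have h1 : (b j * Ck / c j) ^ q = (b j) ^ q * Ck ^ q / (c j) ^ q := by
        rw [Real.div_rpow (mul_nonneg (hb0 j) hCk0.le) (hc0 j).le, Real.mul_rpow (hb0 j) hCk0.le]
      rw [h1, Real.rpow_sub hCk0, Real.rpow_sub (hc0 j), Real.rpow_one, Real.rpow_one]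
      have hcq : (c j) ^ q ≠ 0 := ne_of_gt (Real.rpow_pos_of_pos (hc0 j) _)
      have hCq : Ck ≠ 0 := ne_of_gt hCk0
      field_simp
    calc (∑ j ∈ Finset.range (k + 1), b j) ^ q
        ≤ ∑ j ∈ Finset.range (k+1), (c j / Ck) * (b j * Ck / c j) ^ q := by
          rw [← heq1]; exact jensen
      _ = Ck ^ (q - 1) * ∑ j ∈ Finset.range (k+1), (c j) ^ (1 - q) * (b j) ^ q := by
          rw [Finset.mul_sum]; exact Finset.sum_congr rfl heq2
      _ ≤ K * ∑ j ∈ Finset.range (k + 1), ((r ^ (k - j) : ℝ)) ^ (1 - q) * (b j) ^ q := by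
          apply mul_le_mul_of_nonneg_right
          · exact Real.rpow_le_rpow hCk0.le hCkle hqm1.le
          · apply Finset.sum_nonneg
            intro j _
            exact mul_nonneg (Real.rpow_nonneg (pow_nonneg hr0.le _) _)
              (Real.rpow_nonneg (hb0 j) _)
  -- nat pow / rpow interchange
  have hpow : ∀ m : ℕ, ((r ^ m : ℝ)) ^ (1 - q) = (r ^ (1 - q)) ^ m := by
    intro m
    rw [← Real.rpow_natCast r m, ← Real.rpow_natCast (r ^ (1-q)) m,
      ← Real.rpow_mul hr0.le, ← Real.rpow_mul hr0.le, mul_comm]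
  -- per-term bound in step B
  have stepB : ∀ j k : ℕ, j ≤ k → k ≤ n →
      (S n / S k) * ((r ^ (k - j) : ℝ)) ^ (1 - q) ≤ (S n / S j) * s ^ (k - j) := by
    intro j k hjk hkn
    have hm := F1 j (k - j) (by omega)
    rw [show j + (k - j) = k by omega] at hm
    have hw : S n / S k ≤ (S n / S j) * (R⁻¹) ^ (k - j) := by
      have h2 : (S n / S j) * (R⁻¹) ^ (k - j) = S n / (S j * R ^ (k - j)) := by
        rw [inv_pow]
        field_simp
      rw [h2]
      apply div_le_div_of_nonneg_left hSn.le
      · exact mul_pos (hS j) (pow_pos hR0 _)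
      · exact hm
    calc (S n / S k) * ((r ^ (k - j) : ℝ)) ^ (1 - q)
        ≤ ((S n / S j) * (R⁻¹) ^ (k - j)) * ((r ^ (k - j) : ℝ)) ^ (1 - q) := by
          exact mul_le_mul_of_nonneg_right hw
            (Real.rpow_nonneg (pow_nonneg hr0.le _) _)
      _ = (S n / S j) * ((R⁻¹ * r ^ (1 - q)) ^ (k - j)) := by
          rw [hpow, mul_pow]; ring
      _ = (S n / S j) * s ^ (k - j) := by rw [hkey]
  -- identity for the RHS weight
  have hident : ∀ j, j ≤ n → (S n / S j) * (b j) ^ q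
      = (S j / S n) ^ (q / p - 1) * (a j) ^ q := by
    intro j _
    have hx : (0:ℝ) < S j / S n := div_pos (hS j) hSn
    have h1 : (b j) ^ q = (S j / S n) ^ (q / p) * (a j) ^ q := by
      rw [hb]
      rw [Real.mul_rpow (Real.rpow_nonneg hx.le _) (ha j),
        ← Real.rpow_mul hx.le]
      rw [show 1 / p * q = q / p by ring]
    rw [h1, Real.rpow_sub hx, Real.rpow_one]
    have : S n / S j = (S j / S n)⁻¹ := by
      field_simp
    rw [this]
    field_simp
  -- main calculation
  calc ∑ k ∈ Finset.range (n + 1), (S n / S k) *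
          (∑ j ∈ Finset.range (k + 1), b j) ^ q
      ≤ ∑ k ∈ Finset.range (n + 1), (S n / S k) *
          (K * ∑ j ∈ Finset.range (k + 1), ((r ^ (k - j) : ℝ)) ^ (1 - q) * (b j) ^ q) := by
        apply Finset.sum_le_sum
        intro k _
        exact mul_le_mul_of_nonneg_left (stepA k) (div_pos hSn (hS k)).le
    _ = K * ∑ k ∈ Finset.range (n + 1), ∑ j ∈ Finset.range (k + 1),
          (S n / S k) * ((r ^ (k - j) : ℝ)) ^ (1 - q) * (b j) ^ q := by
        simp only [Finset.mul_sum]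
        apply Finset.sum_congr rfl
        intro k _
        apply Finset.sum_congr rfl
        intro j _
        ring
    _ = K * ∑ j ∈ Finset.range (n + 1), ∑ k ∈ Finset.Ico j (n + 1),
          (S n / S k) * ((r ^ (k - j) : ℝ)) ^ (1 - q) * (b j) ^ q := by
        congr 1
        apply Finset.sum_comm'
        intro k j
        simp only [Finset.mem_range, Finset.mem_Ico]
        omega
    _ ≤ K * ∑ j ∈ Finset.range (n + 1),
          (1 - s)⁻¹ * ((S j / S n) ^ (q / p - 1) * (a j) ^ q) := by
        apply mul_le_mul_of_nonneg_left _ hK0.le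
        apply Finset.sum_le_sum
        intro j hj
        simp only [Finset.mem_range] at hj
        have hjn : j ≤ n := by omega
        calc ∑ k ∈ Finset.Ico j (n + 1),
              (S n / S k) * ((r ^ (k - j) : ℝ)) ^ (1 - q) * (b j) ^ q
            ≤ ∑ k ∈ Finset.Ico j (n + 1), (S n / S j) * s ^ (k - j) * (b j) ^ q := by
              apply Finset.sum_le_sum
              intro k hk
              simp only [Finset.mem_Ico] at hk
              exact mul_le_mul_of_nonneg_right
                (stepB j k hk.1 (by omega)) (Real.rpow_nonneg (hb0 j) _)
          _ = (S n / S j) * (b j) ^ q * ∑ k ∈ Finset.Ico j (n + 1), s ^ (k - j) := by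
              rw [Finset.mul_sum]
              apply Finset.sum_congr rfl
              intro k _
              ring
          _ ≤ (S n / S j) * (b j) ^ q * (1 - s)⁻¹ := by
              apply mul_le_mul_of_nonneg_left _
                (mul_nonneg (div_pos hSn (hS j)).le (Real.rpow_nonneg (hb0 j) _))
              have : ∑ k ∈ Finset.Ico j (n + 1), s ^ (k - j)
                  = ∑ i ∈ Finset.range (n + 1 - j), s ^ i := by
                rw [Finset.sum_Ico_eq_sum_range]
                apply Finset.sum_congr rfl
                intro i _
                congr 1
                omega
              rw [this]
              exact geo_bound s hs0.le hs1 _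
          _ = (1 - s)⁻¹ * ((S j / S n) ^ (q / p - 1) * (a j) ^ q) := by
              rw [hident j hjn]; ring
    _ = K * (1 - s)⁻¹ * ∑ j ∈ Finset.range (n + 1),
          (S j / S n) ^ (q / p - 1) * (a j) ^ q := by
        simp only [Finset.mul_sum]
        apply Finset.sum_congr rfl
        intro j _
        ring
end
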